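/- Let M be positive semidefinite and f(x) = c^T x + d - sqrt(δ² + (x-x*)^T M (x-x*)) with δ ≥ 0. Then f is bounded above if and only if c ∈ col(M) and c^T M⁺ c ≤ 1, where M⁺ is the Moore–Penrose pseudoinverse of M. -/

import Mathlib

/-! Along a line `xs + t • v` the function is `const + t (c ⬝ᵥ v) - √(δ² + t² vᵀMv)`, so it is
bounded above iff `c ⬝ᵥ v ≤ √(vᵀMv)` for every `v`. Testing this on `ker M` forces `c ⊥ ker M`,
i.e. `c = M M⁺ c`, and testing it on `v = M⁺ c` gives `s ≤ √s` for `s = cᵀM⁺c`, i.e. `s ≤ 1`.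
Conversely, if `c = M w` then Cauchy–Schwarz for the form of `M` gives
`c ⬝ᵥ v = wᵀMv ≤ √(wᵀMw) √(vᵀMv)` with `wᵀMw = cᵀM⁺c`. -/

open Matrix

noncomputable def enorm {m : ℕ} (v : Fin m → ℝ) : ℝ := Real.sqrt (∑ i, v i ^ 2)

namespace Matrix

variable {ι R : Type*} [Fintype ι]

theorem IsSymm.mulVec_dotProduct [CommSemiring R] {M : Matrix ι ι R} (hM : M.IsSymm)
    (u v : ι → R) : M *ᵥ u ⬝ᵥ v = u ⬝ᵥ M *ᵥ v := by
  rw [← hM.eq, mulVec_transpose, dotProduct_mulVec, hM.eq]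

theorem IsSymm.mul_mul_eq_self_of_mul_mul_eq_self [CommSemiring R] {M N : Matrix ι ι R}
    (hM : M.IsSymm) (h : M * N * M = M) (hMN : (M * N)ᵀ = M * N) : M * (M * N) = M := by
  calc M * (M * N) = (M * N * M)ᵀ := by rw [transpose_mul, hMN, hM.eq]
    _ = M := by rw [h, hM.eq]

theorem IsSymm.mulVec_mulVec_eq_of_forall_ker_dotProduct_nonpos
    [CommRing R] [LinearOrder R] [IsStrictOrderedRing R] {M N : Matrix ι ι R}
    (hM : M.IsSymm) (h : M * N * M = M) (hMN : (M * N)ᵀ = M * N) {c : ι → R}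
    (hc : ∀ v, M *ᵥ v = 0 → c ⬝ᵥ v ≤ 0) : M *ᵥ N *ᵥ c = c := by
  -- `u` is the component of `c` in `ker M`
  set u := c - M *ᵥ N *ᵥ c
  have hMu : M *ᵥ u = 0 := by
    rw [mulVec_sub, mulVec_mulVec, mulVec_mulVec, mul_assoc,
      hM.mul_mul_eq_self_of_mul_mul_eq_self h hMN, sub_self]
  have hcu : c ⬝ᵥ u = u ⬝ᵥ u := by
    conv_lhs => rw [← sub_add_cancel c (M *ᵥ N *ᵥ c)]
    rw [add_dotProduct, hM.mulVec_dotProduct, hMu, dotProduct_zero, add_zero]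
  have hu : u ⬝ᵥ u = 0 :=
    le_antisymm (hcu ▸ hc u hMu) (Finset.sum_nonneg fun i _ => mul_self_nonneg (u i))
  exact (sub_eq_zero.mp (dotProduct_self_eq_zero.mp hu)).symm

theorem PosSemidef.dotProduct_mulVec_sq_le {M : Matrix ι ι ℝ} (hM : M.PosSemidef)
    (u v : ι → ℝ) : (u ⬝ᵥ M *ᵥ v) ^ 2 ≤ (u ⬝ᵥ M *ᵥ u) * (v ⬝ᵥ M *ᵥ v) := by
  classical
  have hvu : v ⬝ᵥ M *ᵥ u = u ⬝ᵥ M *ᵥ v := by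
    rw [← (isHermitian_iff_isSymm.mp hM.isHermitian).mulVec_dotProduct, dotProduct_comm]
  have := M.toBilin'.apply_mul_apply_le_of_forall_zero_le
    (fun x => by simpa [toBilin'_apply'] using hM.dotProduct_mulVec_nonneg x) u v
  rwa [toBilin'_apply', toBilin'_apply', toBilin'_apply', toBilin'_apply', hvu, ← sq] at this

end Matrix

theorem Real.le_sqrt_of_forall_mul_sub_sqrt_le {a β γ K : ℝ} (ha : 0 ≤ a)
    (h : ∀ t, 0 ≤ t → β * t - √(a + t ^ 2 * γ) ≤ K) : β ≤ √γ := by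
  have hsqrt : ∀ t, 0 ≤ t → √(a + t ^ 2 * γ) ≤ √a + t * √γ := by
    intro t ht
    rw [Real.sqrt_le_left (by positivity)]
    nlinarith [Real.sq_sqrt ha, Real.sq_sqrt' (x := γ), le_max_left γ 0, sq_nonneg t,
      mul_nonneg (mul_nonneg ht (Real.sqrt_nonneg a)) (Real.sqrt_nonneg γ)]
  by_contra! hlt
  set t := (|K| + √a + 1) / (β - √γ)
  have ht : (β - √γ) * t = |K| + √a + 1 := mul_div_cancel₀ _ (sub_pos.mpr hlt).ne'
  have := h t (by positivity)
  nlinarith [hsqrt t (by positivity), le_abs_self K]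

section SecondOrderCone

variable {ι : Type*} [Fintype ι]

noncomputable def socf (c xs : ι → ℝ) (d δ : ℝ) (M : Matrix ι ι ℝ) (x : ι → ℝ) : ℝ :=
  c ⬝ᵥ x + d - √(δ ^ 2 + (x - xs) ⬝ᵥ M *ᵥ (x - xs))

theorem socf_add_smul (c xs : ι → ℝ) (d δ : ℝ) (M : Matrix ι ι ℝ) (t : ℝ) (v : ι → ℝ) :
    socf c xs d δ M (xs + t • v) =
      c ⬝ᵥ xs + d + c ⬝ᵥ v * t - √(δ ^ 2 + t ^ 2 * (v ⬝ᵥ M *ᵥ v)) := by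
  rw [socf, add_sub_cancel_left, dotProduct_add, mulVec_smul, dotProduct_smul, smul_dotProduct,
    dotProduct_smul, smul_eq_mul, smul_eq_mul, smul_eq_mul]
  ring_nf

theorem exists_forall_socf_le_iff {c xs : ι → ℝ} {d δ : ℝ} {M : Matrix ι ι ℝ} :
    (∃ K, ∀ x, socf c xs d δ M x ≤ K) ↔ ∀ v, c ⬝ᵥ v ≤ √(v ⬝ᵥ M *ᵥ v) := by
  constructor
  · rintro ⟨K, hK⟩ v
    refine Real.le_sqrt_of_forall_mul_sub_sqrt_le (K := K - c ⬝ᵥ xs - d) (sq_nonneg δ) fun t _ => ?_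
    have := hK (xs + t • v)
    rw [socf_add_smul] at this
    linarith
  · intro h
    refine ⟨c ⬝ᵥ xs + d, fun x => ?_⟩
    have hle : √((x - xs) ⬝ᵥ M *ᵥ (x - xs)) ≤ √(δ ^ 2 + (x - xs) ⬝ᵥ M *ᵥ (x - xs)) :=
      Real.sqrt_le_sqrt (le_add_of_nonneg_left (sq_nonneg δ))
    have := h (x - xs)
    rw [dotProduct_sub] at this
    unfold socf
    linarith

theorem forall_dotProduct_le_sqrt_iff_of_pinv {c : ι → ℝ} {M Mp : Matrix ι ι ℝ}
    (hM : M.PosSemidef) (hpinv : M * Mp * M = M) (hMMp : (M * Mp)ᵀ = M * Mp) :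
    (∀ v, c ⬝ᵥ v ≤ √(v ⬝ᵥ M *ᵥ v)) ↔ c ∈ Set.range M.mulVec ∧ c ⬝ᵥ Mp *ᵥ c ≤ 1 := by
  have hMs : M.IsSymm := isHermitian_iff_isSymm.mp hM.isHermitian
  constructor
  · intro h
    have hc : M *ᵥ Mp *ᵥ c = c :=
      hMs.mulVec_mulVec_eq_of_forall_ker_dotProduct_nonpos hpinv hMMp fun v hv => by
        simpa [hv] using h v
    refine ⟨⟨_, hc⟩, ?_⟩
    have := h (Mp *ᵥ c)
    rwa [hc, dotProduct_comm (Mp *ᵥ c), Real.le_sqrt_self_iff] at this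
  · rintro ⟨⟨w, rfl⟩, hw⟩ v
    have hwMw : w ⬝ᵥ M *ᵥ w ≤ 1 := by
      rwa [hMs.mulVec_dotProduct, mulVec_mulVec, mulVec_mulVec, hpinv] at hw
    rw [hMs.mulVec_dotProduct]
    apply Real.le_sqrt_of_sq_le
    calc (w ⬝ᵥ M *ᵥ v) ^ 2 ≤ (w ⬝ᵥ M *ᵥ w) * (v ⬝ᵥ M *ᵥ v) := hM.dotProduct_mulVec_sq_le w v
      _ ≤ v ⬝ᵥ M *ᵥ v := mul_le_of_le_one_left (by simpa using hM.dotProduct_mulVec_nonneg v) hwMw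

end SecondOrderCone

theorem socf_bounded_above_iff_psd_general {n : ℕ} (c xs : Fin n → ℝ) (d δ : ℝ)
    (M : Matrix (Fin n) (Fin n) ℝ) (hM : M.PosSemidef)
    (Mp : Matrix (Fin n) (Fin n) ℝ)
    (h1 : M * Mp * M = M)
    (h3 : (M * Mp)ᵀ = M * Mp)
    (f : (Fin n → ℝ) → ℝ)
    (hf : ∀ x, f x = c ⬝ᵥ x + d - Real.sqrt (δ ^ 2 + (x - xs) ⬝ᵥ M.mulVec (x - xs))) :
    (∃ K : ℝ, ∀ x, f x ≤ K) ↔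
      c ∈ Set.range M.mulVec ∧ c ⬝ᵥ Mp.mulVec c ≤ 1 := by
  obtain rfl : f = socf c xs d δ M := funext hf
  exact exists_forall_socf_le_iff.trans (forall_dotProduct_le_sqrt_iff_of_pinv hM h1 h3)

theorem socf_bounded_above_iff_psd {n : ℕ} (c xs : Fin n → ℝ) (d δ : ℝ)
    (M : Matrix (Fin n) (Fin n) ℝ) (hM : M.PosSemidef) (hδ : 0 ≤ δ)
    (Mp : Matrix (Fin n) (Fin n) ℝ)
    (h1 : M * Mp * M = M) (h2 : Mp * M * Mp = Mp)
    (h3 : (M * Mp)ᵀ = M * Mp) (h4 : (Mp * M)ᵀ = Mp * M)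
    (f : (Fin n → ℝ) → ℝ)
    (hf : ∀ x, f x = c ⬝ᵥ x + d - Real.sqrt (δ ^ 2 + (x - xs) ⬝ᵥ M.mulVec (x - xs))) :
    (∃ K : ℝ, ∀ x, f x ≤ K) ↔
      c ∈ Set.range M.mulVec ∧ c ⬝ᵥ Mp.mulVec c ≤ 1 :=
  socf_bounded_above_iff_psd_general c xs d δ M hM Mp h1 h3 f hf
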